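/- Let θ_t^{BP}(α) be the accumulate BP(λ) iterates with initial parameter θ_0 and learning rate α. Then for every 1 ≤ t ≤ T, lim_{α→0⁺} (θ_t^{BP}(α) − θ_0)/α = Σ_{a=0}^{t−1} Δ̄_a^t; that is, to first order in α the accumulate BP(λ) update equals the offline λ-SG update evaluated at θ_0. -/

import Mathlib

/-!
Unrolling the recursion gives `θ_t^{BP} − θ_0 = α Σ_{s<t} (δ_s e_s)ᵀ` exactly, and each `δ_s e_s`
depends continuously on `α`, so the first-order coefficient is `Σ_{s<t} δ_s e_s` at `α = 0`, where
the parameter stays at `θ_0` and `e_s = Σ_{a≤s} (γλ)^{s−a} P(s,a) Dg_a(θ_0)`.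
On the forward side, consecutive n-step gradients differ by `γ^n δ_{a+n} P(a+n,a)`, so the λ-return
telescopes: `Ḡ_a^{λ|t} − g_a(θ_0) = Σ_{a≤s<t} (γλ)^{s−a} δ_s P(s,a)`. Exchanging the two sums over
`a ≤ s < t` identifies `Σ_a Δ̄_a^t` with the backward-view sum.
-/

open Filter Finset Matrix

noncomputable section

/-- The Euclidean (ℓ²) norm of a finite real vector. -/
def euclNorm {k : ℕ} (x : Fin k → ℝ) : ℝ := Real.sqrt (∑ i, x i ^ 2)

/-- Data of the synthetic-gradient setting: the gradient discount factor `γ`,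
the trace-decay parameter `lam` (λ), the RNN Jacobians `J t = ∂h_{t+1}/∂h_t`,
the immediate loss gradients `c t = ∂L_t/∂h_t` (row vectors), the synthesiser
maps `g t : θ ↦ g(h_t; θ)` (producing row vectors), and the initial parameter `θ0`. -/
structure SGData (d m : ℕ) where
  γ : ℝ
  lam : ℝ
  J : ℕ → Matrix (Fin d) (Fin d) ℝ
  c : ℕ → Fin d → ℝ
  g : ℕ → (Fin m → ℝ) → Fin d → ℝ
  θ0 : Fin m → ℝ

namespace SGData

variable {d m : ℕ}

/-- Propagator `Pfrom a n = P(a+n, a) = J_{a+n-1} ⋯ J_a`. -/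
def Pfrom (p : SGData d m) (a : ℕ) : ℕ → Matrix (Fin d) (Fin d) ℝ
  | 0 => 1
  | n + 1 => p.J (a + n) * p.Pfrom a n

/-- Propagator `P b a = P(b, a) = J_{b-1} ⋯ J_a` (for `b ≥ a`). -/
def P (p : SGData d m) (b a : ℕ) : Matrix (Fin d) (Fin d) ℝ := p.Pfrom a (b - a)

/-- The Jacobian matrix `Dg_t(θ) ∈ ℝ^{d×m}` of the synthesiser map `g t` at `θ`. -/
def Dg (p : SGData d m) (t : ℕ) (θ : Fin m → ℝ) : Matrix (Fin d) (Fin m) ℝ :=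
  Matrix.of fun i j => fderiv ℝ (p.g t) θ (Pi.single j 1) i

/-- The temporal-difference error `δ_t` at parameter `θ`:
`δ_t = (c_{t+1} + γ g_{t+1}(θ)) J_t − g_t(θ)`. -/
def tdErr (p : SGData d m) (t : ℕ) (θ : Fin m → ℝ) : Fin d → ℝ :=
  Matrix.vecMul (p.c (t + 1) + p.γ • p.g (t + 1) θ) (p.J t) - p.g t θ

/-- The accumulate BP(λ) state `(θ_t^{BP}, e_t)` with learning rate `α`:
`θ_0^{BP} = θ0`, `e_0 = Dg_0(θ_0^{BP})`,
`θ_{t+1}^{BP} = θ_t^{BP} + α (δ_t e_t)ᵀ`, `e_{t+1} = γλ J_t e_t + Dg_{t+1}(θ_{t+1}^{BP})`. -/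
def BPstate (p : SGData d m) (α : ℝ) : ℕ → (Fin m → ℝ) × Matrix (Fin d) (Fin m) ℝ
  | 0 => (p.θ0, p.Dg 0 p.θ0)
  | t + 1 =>
    let s := p.BPstate α t
    let θ' := s.1 + α • Matrix.vecMul (p.tdErr t s.1) s.2
    (θ', (p.γ * p.lam) • (p.J t * s.2) + p.Dg (t + 1) θ')

/-- The accumulate BP(λ) iterate `θ_t^{BP}(α)`. -/
def θBP (p : SGData d m) (α : ℝ) (t : ℕ) : Fin m → ℝ := (p.BPstate α t).1

/-- `Ḡ_a^{(n)}`: the n-step synthetic gradient with the bootstrap estimate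
evaluated at the initial parameter `θ0`. -/
def Gbar (p : SGData d m) (a n : ℕ) : Fin d → ℝ :=
  (∑ k ∈ Finset.range n, p.γ ^ k • Matrix.vecMul (p.c (a + k + 1)) (p.P (a + k + 1) a))
    + p.γ ^ n • Matrix.vecMul (p.g (a + n) p.θ0) (p.P (a + n) a)

/-- `Ḡ_a^{λ|t}`: the interim λ-weighted synthetic gradient evaluated at `θ0`. -/
def GbarLam (p : SGData d m) (a t : ℕ) : Fin d → ℝ :=
  (1 - p.lam) • (∑ n ∈ Finset.range (t - a - 1), p.lam ^ n • p.Gbar a (n + 1))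
    + p.lam ^ (t - a - 1) • p.Gbar a (t - a)

/-- `Δ̄_a^t = ((Ḡ_a^{λ|t} − g_a(θ0)) Dg_a(θ0))ᵀ ∈ ℝ^m`. -/
def Δbar (p : SGData d m) (a t : ℕ) : Fin m → ℝ :=
  Matrix.vecMul (p.GbarLam a t - p.g a p.θ0) (p.Dg a p.θ0)

/-- Online n-step target `G_k^{(n)}` using bootstrap estimates
`ĝ_s = g_s(hist (s−1))` taken from the online history `hist`. -/
def GnOn (p : SGData d m) (hist : ℕ → Fin m → ℝ) (k n : ℕ) : Fin d → ℝ :=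
  (∑ j ∈ Finset.range n, p.γ ^ j • Matrix.vecMul (p.c (k + j + 1)) (p.P (k + j + 1) k))
    + p.γ ^ n • Matrix.vecMul (p.g (k + n) (hist (k + n - 1))) (p.P (k + n) k)

/-- Online interim target `G_k^{λ|H}` with horizon `H`. -/
def GLamOn (p : SGData d m) (hist : ℕ → Fin m → ℝ) (H k : ℕ) : Fin d → ℝ :=
  (1 - p.lam) • (∑ n ∈ Finset.range (H - k - 1), p.lam ^ n • p.GnOn hist k (n + 1))
    + p.lam ^ (H - k - 1) • p.GnOn hist k (H - k)

/-- Inner pass of the online λ-SG algorithm at horizon `H`: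
`φ_0 = θ^{⟨H−1⟩}` and `φ_{k+1} = φ_k + α ((G_k^{λ|H} − g_k(φ_k)) Dg_k(φ_k))ᵀ`. -/
def phi (p : SGData d m) (α : ℝ) (hist : ℕ → Fin m → ℝ) (H : ℕ) : ℕ → Fin m → ℝ
  | 0 => hist (H - 1)
  | k + 1 =>
    p.phi α hist H k
      + α • Matrix.vecMul (p.GLamOn hist H k - p.g k (p.phi α hist H k))
          (p.Dg k (p.phi α hist H k))

/-- History of online λ-SG iterates: `hist α t s = θ^{⟨s⟩}` for all `s ≤ t`,
with `θ^{⟨0⟩} = θ0` and `θ^{⟨t+1⟩} = φ_{t+1}` from the inner pass at horizon `t+1`. -/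
def hist (p : SGData d m) (α : ℝ) : ℕ → ℕ → Fin m → ℝ
  | 0 => fun _ => p.θ0
  | t + 1 => Function.update (p.hist α t) (t + 1) (p.phi α (p.hist α t) (t + 1) (t + 1))

/-- The online λ-SG iterate `θ_t^λ(α) = θ^{⟨t⟩}`. -/
def θon (p : SGData d m) (α : ℝ) (t : ℕ) : Fin m → ℝ := p.hist α t t

end SGData

theorem one_sub_smul_sum_pow_smul_add_pow_smul_eq {R M : Type*} [CommRing R] [AddCommGroup M]
    [Module R M] (lam : R) (G : ℕ → M) (k : ℕ) :
    (1 - lam) • ∑ n ∈ range k, lam ^ n • G (n + 1) + lam ^ k • G (k + 1)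
      = G 0 + ∑ j ∈ range (k + 1), lam ^ j • (G (j + 1) - G j) := by
  induction k with
  | zero => simp
  | succ k ih =>
    rw [sum_range_succ, sum_range_succ (n := k + 1)]
    linear_combination (norm := module) ih

namespace SGData

variable {d m : ℕ} (p : SGData d m)

lemma P_self (a : ℕ) : p.P a a = 1 := by
  simp [P, Pfrom]

lemma P_succ {a s : ℕ} (h : a ≤ s) : p.P (s + 1) a = p.J s * p.P s a := by
  rw [P, P, Nat.sub_add_comm h, Pfrom, Nat.add_sub_cancel' h]

lemma Gbar_zero (a : ℕ) : p.Gbar a 0 = p.g a p.θ0 := by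
  simp [Gbar, P_self]

lemma Gbar_succ_sub (a n : ℕ) :
    p.Gbar a (n + 1) - p.Gbar a n = p.γ ^ n • (p.tdErr (a + n) p.θ0 ᵥ* p.P (a + n) a) := by
  simp only [Gbar, tdErr, sum_range_succ, ← add_assoc a n 1, p.P_succ (Nat.le_add_right a n),
    sub_vecMul, add_vecMul, smul_vecMul, ← vecMul_vecMul]
  module

lemma GbarLam_sub_g {a t : ℕ} (h : a < t) :
    p.GbarLam a t - p.g a p.θ0
      = ∑ j ∈ range (t - a), (p.γ * p.lam) ^ j • (p.tdErr (a + j) p.θ0 ᵥ* p.P (a + j) a) := by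
  obtain ⟨k, hk⟩ : ∃ k, t - a = k + 1 := ⟨t - a - 1, by omega⟩
  rw [GbarLam, show t - a - 1 = k by omega, hk,
    one_sub_smul_sum_pow_smul_add_pow_smul_eq, Gbar_zero, add_sub_cancel_left]
  simp only [Gbar_succ_sub, smul_smul, mul_pow, mul_comm]

lemma Δbar_eq_sum {a t : ℕ} (h : a < t) :
    p.Δbar a t = ∑ s ∈ Ico a t,
      (p.γ * p.lam) ^ (s - a) • (p.tdErr s p.θ0 ᵥ* (p.P s a * p.Dg a p.θ0)) := by
  rw [Δbar, p.GbarLam_sub_g h, sum_vecMul, sum_Ico_eq_sum_range]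
  simp only [Nat.add_sub_cancel_left, smul_vecMul, vecMul_vecMul]

lemma BPstate_zero (t : ℕ) :
    p.BPstate 0 t
      = (p.θ0, ∑ a ∈ range (t + 1), (p.γ * p.lam) ^ (t - a) • (p.P t a * p.Dg a p.θ0)) := by
  induction t with
  | zero => simp [BPstate, P_self]
  | succ t ih =>
    simp only [BPstate, ih, zero_smul, add_zero, Prod.mk.injEq, true_and]
    rw [sum_range_succ (n := t + 1), Nat.sub_self, pow_zero, one_smul, P_self, Matrix.one_mul,
      Matrix.mul_sum, smul_sum]
    congr 1
    refine sum_congr rfl fun a ha => ?_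
    have hat : a ≤ t := Nat.lt_succ_iff.mp (mem_range.mp ha)
    rw [Matrix.mul_smul, smul_smul, ← Matrix.mul_assoc, ← p.P_succ hat, Nat.succ_sub hat,
      pow_succ', mul_comm]

/-- `δ_s e_s`, so that `θ_{s+1}^{BP} = θ_s^{BP} + α (δ_s e_s)ᵀ`. -/
def bpIncrement (α : ℝ) (s : ℕ) : Fin m → ℝ :=
  p.tdErr s (p.BPstate α s).1 ᵥ* (p.BPstate α s).2

lemma θBP_sub_θ0 (α : ℝ) (t : ℕ) :
    p.θBP α t - p.θ0 = α • ∑ s ∈ range t, p.bpIncrement α s := by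
  induction t with
  | zero => simp [θBP, BPstate]
  | succ t ih =>
    rw [sum_range_succ, smul_add, ← ih]
    simp only [θBP, BPstate, bpIncrement]
    abel

lemma continuous_Dg {t : ℕ} (hg : ContDiff ℝ 1 (p.g t)) : Continuous (p.Dg t) :=
  continuous_pi fun i => continuous_pi fun _ =>
    (continuous_apply i).comp ((hg.continuous_fderiv one_ne_zero).clm_apply continuous_const)

section Continuity

variable {p} (hg : ∀ t, Continuous (p.g t)) (hDg : ∀ t, Continuous (p.Dg t))
include hg

lemma continuous_tdErr (t : ℕ) : Continuous (p.tdErr t) := by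
  unfold tdErr
  fun_prop

include hDg

lemma continuous_BPstate (t : ℕ) : Continuous fun α : ℝ => p.BPstate α t := by
  induction t with
  | zero => exact continuous_const
  | succ t ih =>
    have hθ := continuous_fst.comp ih
    have he := continuous_snd.comp ih
    have hθ' : Continuous fun α : ℝ =>
        (p.BPstate α t).1 + α • (p.tdErr t (p.BPstate α t).1 ᵥ* (p.BPstate α t).2) :=
      hθ.add (continuous_id.smul (((continuous_tdErr hg t).comp hθ).matrix_vecMul he))
    exact hθ'.prodMk
      (((continuous_const (y := p.J t)).matrix_mul he).const_smul (p.γ * p.lam) |>.add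
        ((hDg (t + 1)).comp hθ'))

lemma continuous_bpIncrement (s : ℕ) : Continuous fun α : ℝ => p.bpIncrement α s :=
  ((continuous_tdErr hg s).comp (continuous_fst.comp (continuous_BPstate hg hDg s))).matrix_vecMul
    (continuous_snd.comp (continuous_BPstate hg hDg s))

lemma tendsto_inv_smul_θBP_sub (t : ℕ) :
    Tendsto (fun α : ℝ => α⁻¹ • (p.θBP α t - p.θ0)) (nhdsWithin 0 (Set.Ioi 0))
      (nhds (∑ s ∈ range t, p.bpIncrement 0 s)) := by
  have hcont : Continuous fun α : ℝ => ∑ s ∈ range t, p.bpIncrement α s :=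
    continuous_finsetSum _ fun s _ => continuous_bpIncrement hg hDg s
  refine (hcont.tendsto 0).mono_left nhdsWithin_le_nhds |>.congr' ?_
  filter_upwards [self_mem_nhdsWithin] with α (hα : 0 < α)
  rw [θBP_sub_θ0, inv_smul_smul₀ hα.ne']

end Continuity

lemma sum_Δbar_eq_sum_bpIncrement_zero (t : ℕ) :
    ∑ a ∈ range t, p.Δbar a t = ∑ s ∈ range t, p.bpIncrement 0 s := by
  rw [sum_congr rfl fun a ha => p.Δbar_eq_sum (mem_range.mp ha), range_eq_Ico,
    sum_Ico_Ico_comm]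
  refine sum_congr rfl fun s _ => ?_
  rw [bpIncrement, BPstate_zero, vecMul_sum, range_eq_Ico]
  simp only [vecMul_smul]

end SGData

theorem BPlam_first_order_is_offline_lamSG_general
    {d m : ℕ} (p : SGData d m)
    (hg : ∀ t : ℕ, ContDiff ℝ 1 (p.g t))
    (t : ℕ) :
    Filter.Tendsto (fun α : ℝ => α⁻¹ • (p.θBP α t - p.θ0))
      (nhdsWithin 0 (Set.Ioi 0)) (nhds (∑ a ∈ Finset.range t, p.Δbar a t)) := by
  rw [p.sum_Δbar_eq_sum_bpIncrement_zero t]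
  exact SGData.tendsto_inv_smul_θBP_sub (fun t => (hg t).continuous)
    (fun t => p.continuous_Dg (hg t)) t

/-- with `γ, λ ∈ [0,1]` and each synthesiser map continuously
differentiable, for every `1 ≤ t ≤ T` the accumulate BP(λ) iterates satisfy
`lim_{α→0⁺} (θ_t^{BP}(α) − θ_0)/α = Σ_{a=0}^{t−1} Δ̄_a^t`, i.e. to first order
in `α` the accumulate BP(λ) update equals the offline λ-SG update at `θ0`. -/
theorem BPlam_first_order_is_offline_lamSG
    {d m : ℕ} (p : SGData d m) (T : ℕ)
    (hγ : p.γ ∈ Set.Icc (0 : ℝ) 1) (hlam : p.lam ∈ Set.Icc (0 : ℝ) 1)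
    (hg : ∀ t : ℕ, ContDiff ℝ 1 (p.g t))
    (t : ℕ) (ht1 : 1 ≤ t) (htT : t ≤ T) :
    Filter.Tendsto (fun α : ℝ => α⁻¹ • (p.θBP α t - p.θ0))
      (nhdsWithin 0 (Set.Ioi 0)) (nhds (∑ a ∈ Finset.range t, p.Δbar a t)) :=
  BPlam_first_order_is_offline_lamSG_general p hg t
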